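/- (Comparison of Dirichlet forms) Let r := 4/p², f : X → (0,∞), and f_⋆(x) := max_{z∈X} r^{−d(x,z)}·f(z). Then E(√f_⋆, √f_⋆) ≤ (4/3)·E(√f, √f) and E(f_⋆, log f_⋆) ≤ (4/3)·E(f, log f). -/

import Mathlib

open Finset

noncomputable section

variable {X : Type*} [Fintype X] [DecidableEq X] [Nonempty X]

/-- Dirichlet form `E(f,g) = (1/2) ∑_{x,y} π(x) Q(x,y) (f(x)-f(y))(g(x)-g(y))`. -/
def dirichletForm (π : X → ℝ) (Q : X → X → ℝ) (f g : X → ℝ) : ℝ :=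
  (1 / 2) * ∑ x : X, ∑ y : X, π x * Q x y * (f x - f y) * (g x - g y)

/-- Mean `E[f] = ∑_x π(x) f(x)`. -/
def mean (π : X → ℝ) (f : X → ℝ) : ℝ := ∑ x : X, π x * f x

/-- Entropy `Ent(f) = E[f log f] - E[f] log E[f]`. -/
def entropy (π : X → ℝ) (f : X → ℝ) : ℝ :=
  mean π (fun x => f x * Real.log (f x)) - mean π f * Real.log (mean π f)

/-- Variance `Var(f) = E[f²] - E[f]²`. -/
def variance (π : X → ℝ) (f : X → ℝ) : ℝ :=
  mean π (fun x => f x ^ 2) - (mean π f) ^ 2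

/-- Total jump rate `Q(x) = ∑_{y ≠ x} Q(x,y)`. -/
def jumpRate (Q : X → X → ℝ) (x : X) : ℝ := ∑ y ∈ univ.erase x, Q x y

/-- Sparsity parameter `p = min_{(x,y) ∈ E} Q(x,y) / max(Q(x), Q(y,x))`. -/
def sparsity (Q : X → X → ℝ) : ℝ :=
  sInf {s : ℝ | ∃ x y : X, x ≠ y ∧ 0 < Q x y ∧
    s = Q x y / max (jumpRate Q x) (Q y x)}

/-- The transition graph `(X, E)` (symmetric since under reversibility
`Q(x,y) > 0 ↔ Q(y,x) > 0`). -/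
def chainGraph (Q : X → X → ℝ) : SimpleGraph X where
  Adj x y := x ≠ y ∧ (0 < Q x y ∨ 0 < Q y x)
  symm := by constructor; intro x y h; exact ⟨h.1.symm, h.2.symm⟩
  loopless := by constructor; intro x h; exact h.1 rfl

/-- Graph distance on `(X, E)`. -/
def graphDist (Q : X → X → ℝ) (x y : X) : ℕ := (chainGraph Q).dist x y

/-- Regularization `f⋆(x) = max_z r^{-d(x,z)} f(z)`. -/
def fStar (Q : X → X → ℝ) (r : ℝ) (f : X → ℝ) (x : X) : ℝ :=
  univ.sup' univ_nonempty (fun z => r ^ (-(graphDist Q x z : ℤ)) * f z)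

/-- `(x,y)` is an allowed transition. -/
def IsEdge (Q : X → X → ℝ) (e : X × X) : Prop := e.1 ≠ e.2 ∧ 0 < Q e.1 e.2

/-- The edge set `E = {(x,y) : x ≠ y, Q(x,y) > 0}` as a finset. -/
def edges (Q : X → X → ℝ) : Finset (X × X) :=
  univ.filter (fun e => e.1 ≠ e.2 ∧ 0 < Q e.1 e.2)

/-- Edge weight `c(x,y) = π(x) Q(x,y)`. -/
def edgeWeight (π : X → ℝ) (Q : X → X → ℝ) (e : X × X) : ℝ := π e.1 * Q e.1 e.2

/-- Distance between edges: `d(e,e') = ℓ - 1` where `ℓ` is the minimal length of a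
path `(x_0, …, x_ℓ)` with `(x_0,x_1) = e` and `(x_{ℓ-1}, x_ℓ) = e'`. -/
def edgeDist (Q : X → X → ℝ) (e e' : X × X) : ℕ :=
  sInf {n : ℕ | ∃ c : ℕ → X, c 0 = e.1 ∧ c 1 = e.2 ∧ c n = e'.1 ∧ c (n + 1) = e'.2 ∧
    ∀ i < n + 1, (chainGraph Q).Adj (c i) (c (i + 1))}

/-- `κ = max_{e' ∈ E} (1/c(e')) ∑_{e ∈ E} c(e) r^{-d(e,e')}`. -/
def kappa (π : X → ℝ) (Q : X → X → ℝ) (r : ℝ) : ℝ :=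
  sSup {k : ℝ | ∃ e' ∈ edges Q, k = (1 / edgeWeight π Q e') *
    ∑ e ∈ edges Q, edgeWeight π Q e * r ^ (-(edgeDist Q e e' : ℤ))}

/-- `H(w) = ((√w + 1)/(√w - 1)) log w` for `w ≠ 1`, and `H(1) = 4`. -/
def Hfun (w : ℝ) : ℝ :=
  if w = 1 then 4 else ((Real.sqrt w + 1) / (Real.sqrt w - 1)) * Real.log w

/-- A function is `r`-regular if `f(x) ≤ r f(y)` across every edge. -/
def IsRRegular (Q : X → X → ℝ) (r : ℝ) (f : X → ℝ) : Prop :=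
  ∀ x y : X, x ≠ y → 0 < Q x y → f x ≤ r * f y

/-- Maximum degree of the graph `(X, E)`. -/
def maxDegree (Q : X → X → ℝ) : ℕ :=
  univ.sup (fun x : X => Nat.card {y : X // (chainGraph Q).Adj x y})

/-- Irreducibility: every state can be reached from every other through allowed
transitions. -/
def MarkovIrreducible (Q : X → X → ℝ) : Prop :=
  ∀ x y : X, Relation.ReflTransGen (fun a b => a ≠ b ∧ 0 < Q a b) x y

/-!
Write `g = f⋆` and take an edge `(x, y)` with `g y < g x`, where `g x = r ^ (-k) * f z` and
`k = d(x, z)`. If `k = 0`, then `f y ≤ g y < g x = f x`, and the edge costs no more for `g` than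
for `f`. Otherwise the last step `(u, z)` of a geodesic from `x` to `z` satisfies `r * f u ≤ f z`,
and since `g y ≥ g x / r`, monotonicity and homogeneity of the cost bound the cost of `(x, y)`
for `g` by `r ^ (-k)` times the cost of `(u, z)` for `f`.

Charge every edge `(x, y)` to all such steep edges `(u, z)`. By sparsity each sphere around `u`
carries at most `1 / p` times the out-weight `π Q` of the previous sphere, so `(u, z)` receives a
total weight of at most `π(u) Q(u, z) / (p r - 1) ≤ π(u) Q(u, z) / 3`. Both the edges on which
`g` decreases and the steep edges form antisymmetric sets, so each carries at most half of the
energy of `f`, and the factor is `1 + 1/3`.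
-/

structure IsEdgeCost (Φ : ℝ → ℝ → ℝ) : Prop where
  symm : ∀ a b, Φ a b = Φ b a
  self_eq_zero : ∀ a, Φ a a = 0
  anti : ∀ a b b', 0 < b → b ≤ b' → b' ≤ a → Φ a b' ≤ Φ a b
  homogeneous : ∀ l a b, 0 < l → 0 < a → 0 < b → Φ (l * a) (l * b) = l * Φ a b

namespace IsEdgeCost

variable {Φ : ℝ → ℝ → ℝ}

lemma nonneg (hΦ : IsEdgeCost Φ) {a b : ℝ} (ha : 0 < a) (hb : 0 < b) : 0 ≤ Φ a b := by
  rcases le_total b a with h | h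
  · simpa [hΦ.self_eq_zero] using hΦ.anti a b a hb h le_rfl
  · rw [hΦ.symm]
    simpa [hΦ.self_eq_zero] using hΦ.anti b a b ha h le_rfl

end IsEdgeCost

lemma isEdgeCost_sqrt : IsEdgeCost fun a b => (√a - √b) * (√a - √b) where
  symm a b := by ring
  self_eq_zero a := by ring
  anti a b b' hb hbb' hb'a := by
    have h₁ : √b ≤ √b' := Real.sqrt_le_sqrt hbb'
    have h₂ : √b' ≤ √a := Real.sqrt_le_sqrt hb'a
    nlinarith
  homogeneous l a b hl _ _ := by
    rw [Real.sqrt_mul hl.le, Real.sqrt_mul hl.le]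
    linear_combination (√a - √b) * (√a - √b) * Real.mul_self_sqrt hl.le

lemma isEdgeCost_log : IsEdgeCost fun a b => (a - b) * (Real.log a - Real.log b) where
  symm a b := by ring
  self_eq_zero a := by ring
  anti a b b' hb hbb' hb'a := by
    have h₁ : Real.log b ≤ Real.log b' := Real.log_le_log hb hbb'
    have h₂ : Real.log b' ≤ Real.log a := Real.log_le_log (hb.trans_le hbb') hb'a
    nlinarith
  homogeneous l a b hl ha hb := by
    rw [Real.log_mul hl.ne' ha.ne', Real.log_mul hl.ne' hb.ne']
    ring

section SymmetricSums

variable {α : Type*} [Fintype α] (w : α → α → ℝ)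

lemma sum_sum_ite_swap (hw : ∀ x y, w x y = w y x) (P : α → α → Prop) [DecidableRel P] :
    ∑ x, ∑ y, (if P y x then w x y else 0) = ∑ x, ∑ y, if P x y then w x y else 0 := by
  rw [Finset.sum_comm]
  simp_rw [hw]

lemma sum_sum_eq_two_mul_sum_sum_ite_lt {β : Type*} [LinearOrder β] (h : α → β)
    (hw : ∀ x y, w x y = w y x) (hw₀ : ∀ x y, h x = h y → w x y = 0) :
    ∑ x, ∑ y, w x y = 2 * ∑ x, ∑ y, if h y < h x then w x y else 0 := by
  have hsplit : ∀ x y,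
      w x y = (if h y < h x then w x y else 0) + if h x < h y then w x y else 0 := by
    intro x y
    rcases lt_trichotomy (h x) (h y) with hxy | hxy | hxy
    · simp [hxy, hxy.not_gt]
    · simp [hxy, hw₀ x y hxy]
    · simp [hxy, hxy.not_gt]
  rw [sum_congr rfl fun x _ => sum_congr rfl fun y _ => hsplit x y]
  simp_rw [sum_add_distrib]
  rw [sum_sum_ite_swap w hw fun x y => h y < h x]
  ring

lemma two_mul_sum_sum_ite_le (P : α → α → Prop) [DecidableRel P] (hw : ∀ x y, w x y = w y x)
    (hw₀ : ∀ x y, 0 ≤ w x y) (hP : ∀ x y, P x y → ¬ P y x) :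
    2 * ∑ x, ∑ y, (if P x y then w x y else 0) ≤ ∑ x, ∑ y, w x y := by
  rw [two_mul]
  nth_rewrite 2 [← sum_sum_ite_swap w hw]
  simp_rw [← sum_add_distrib]
  refine sum_le_sum fun x _ => sum_le_sum fun y _ => ?_
  by_cases hxy : P x y
  · simp [hxy, hP x y hxy]
  · split_ifs <;> simp [hw₀]

end SymmetricSums

namespace SimpleGraph

variable {V : Type*} {G : SimpleGraph V}

lemma exists_adj_dist_eq_of_dist_eq_add_one {u v : V} {k : ℕ} (h : G.dist u v = k + 1) :
    ∃ w, G.Adj u w ∧ G.dist w v = k := by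
  obtain ⟨p, hp⟩ :=
    (Reachable.of_dist_ne_zero (by omega : G.dist u v ≠ 0)).exists_walk_length_eq_dist
  cases p with
  | nil => simp at h
  | @cons _ w _ hadj q =>
    refine ⟨w, hadj, le_antisymm ?_ ?_⟩
    · have := dist_le q
      simp only [Walk.length_cons] at hp
      omega
    · have := hadj.reachable.dist_triangle_left v
      rw [dist_eq_one_iff_adj.mpr hadj] at this
      omega

variable [Fintype V] [DecidableEq V] {c : V → V → ℝ} {p : ℝ}

/-- Every vertex at distance `j + 1` from `u` has a neighbour at distance `j`, through which it
pays for its out-weight. -/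
lemma mul_sum_sphere_succ_le (hc : ∀ x y, x ≠ y → 0 ≤ c x y)
    (hsparse : ∀ x y, G.Adj x y → p * ∑ z ∈ univ.erase y, c y z ≤ c x y) (u : V) (j : ℕ) :
    p * ∑ x with G.dist u x = j + 1, ∑ z ∈ univ.erase x, c x z ≤
      ∑ x with G.dist u x = j, ∑ z ∈ univ.erase x, c x z := by
  have hne : ∀ x y, G.dist u x = j + 1 → G.dist u y = j → y ≠ x := by
    rintro x y hx hy rfl
    omega
  rw [mul_sum]
  calc ∑ x with G.dist u x = j + 1, p * ∑ z ∈ univ.erase x, c x z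
      ≤ ∑ x with G.dist u x = j + 1, ∑ y with G.dist u y = j, c y x := by
        refine sum_le_sum fun x hx => ?_
        rw [mem_filter] at hx
        obtain ⟨y, hxy, hy⟩ := exists_adj_dist_eq_of_dist_eq_add_one (dist_comm.trans hx.2)
        rw [dist_comm] at hy
        refine (hsparse y x hxy.symm).trans (single_le_sum (f := fun y => c y x) ?_ ?_)
        · exact fun y' hy' => hc y' x (hne x y' hx.2 (mem_filter.mp hy').2)
        · exact mem_filter.mpr ⟨mem_univ y, hy⟩
    _ = ∑ y with G.dist u y = j, ∑ x with G.dist u x = j + 1, c y x := sum_comm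
    _ ≤ ∑ y with G.dist u y = j, ∑ z ∈ univ.erase y, c y z := by
        refine sum_le_sum fun y hy => sum_le_sum_of_subset_of_nonneg ?_ ?_
        · intro x hx
          exact mem_erase.mpr ⟨(hne x y (mem_filter.mp hx).2 (mem_filter.mp hy).2).symm,
            mem_univ x⟩
        · exact fun z hz _ => hc y z (mem_erase.mp hz).1.symm

lemma pow_mul_sum_sphere_le (hG : G.Connected) (hp : 0 ≤ p) (hc : ∀ x y, x ≠ y → 0 ≤ c x y)
    (hsparse : ∀ x y, G.Adj x y → p * ∑ z ∈ univ.erase y, c y z ≤ c x y) (u : V) (j : ℕ) :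
    p ^ j * ∑ x with G.dist u x = j, ∑ z ∈ univ.erase x, c x z ≤ ∑ z ∈ univ.erase u, c u z := by
  induction j with
  | zero => simp only [pow_zero, one_mul, hG.dist_eq_zero_iff, filter_eq, mem_univ, if_true,
      sum_singleton, le_refl]
  | succ j ih =>
    calc p ^ (j + 1) * ∑ x with G.dist u x = j + 1, ∑ z ∈ univ.erase x, c x z
        = p ^ j * (p * ∑ x with G.dist u x = j + 1, ∑ z ∈ univ.erase x, c x z) := by ring
      _ ≤ p ^ j * ∑ x with G.dist u x = j, ∑ z ∈ univ.erase x, c x z := by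
          gcongr
          exact mul_sum_sphere_succ_le hc hsparse u j
      _ ≤ _ := ih

lemma sum_div_pow_dist_le (hG : G.Connected) (hp : 0 < p) (hc : ∀ x y, x ≠ y → 0 ≤ c x y)
    (hsparse : ∀ x y, G.Adj x y → p * ∑ z ∈ univ.erase y, c y z ≤ c x y) {r : ℝ}
    (hpr : 1 < p * r) (u : V) :
    ∑ x, (∑ z ∈ univ.erase x, c x z) / r ^ G.dist u x ≤
      (∑ z ∈ univ.erase u, c u z) / (1 - (p * r)⁻¹) := by
  set m := fun x => ∑ z ∈ univ.erase x, c x z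
  have hr : 0 < r := pos_of_mul_pos_right (one_pos.trans hpr) hp.le
  have hm : 0 ≤ m u := sum_nonneg fun z hz => hc u z (mem_erase.mp hz).1.symm
  have hq₀ : 0 ≤ (p * r)⁻¹ := by positivity
  have hq₁ : (p * r)⁻¹ < 1 := inv_lt_one_of_one_lt₀ hpr
  rw [← sum_fiberwise_of_maps_to (t := univ.image (G.dist u))
    (fun x _ => mem_image_of_mem _ (mem_univ x))]
  calc ∑ j ∈ univ.image (G.dist u), ∑ x with G.dist u x = j, m x / r ^ G.dist u x
      = ∑ j ∈ univ.image (G.dist u), (∑ x with G.dist u x = j, m x) / r ^ j := by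
        refine sum_congr rfl fun j _ => ?_
        rw [sum_div]
        exact sum_congr rfl fun x hx => by rw [(mem_filter.mp hx).2]
    _ ≤ ∑ j ∈ univ.image (G.dist u), m u * (p * r)⁻¹ ^ j := by
        refine sum_le_sum fun j _ => ?_
        have := pow_mul_sum_sphere_le hG hp.le hc hsparse u j
        have hdiv : m u * (p * r)⁻¹ ^ j * r ^ j = m u / p ^ j := by
          rw [inv_pow, mul_pow]
          field_simp
        rw [div_le_iff₀ (by positivity), hdiv, le_div_iff₀ (by positivity), mul_comm]
        exact this
    _ = m u * ∑ j ∈ univ.image (G.dist u), (p * r)⁻¹ ^ j := (mul_sum _ _ _).symm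
    _ ≤ m u * (1 - (p * r)⁻¹)⁻¹ := by
        gcongr
        rw [← tsum_geometric_of_lt_one hq₀ hq₁]
        exact (summable_geometric_of_lt_one hq₀ hq₁).sum_le_tsum _ fun j _ => by positivity
    _ = m u / (1 - (p * r)⁻¹) := (div_eq_mul_inv _ _).symm

end SimpleGraph

section MarkovGenerator

variable {V : Type*} {π : V → ℝ} {Q : V → V → ℝ}

lemma MarkovIrreducible.connected [Nonempty V] (h : MarkovIrreducible Q) :
    (chainGraph Q).Connected := by
  rw [SimpleGraph.connected_iff]
  refine ⟨fun u v => ?_, ‹_›⟩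
  rw [SimpleGraph.reachable_iff_reflTransGen]
  exact Relation.ReflTransGen.mono (fun a b hab => ⟨hab.1, Or.inl hab.2⟩) u v (h u v)

lemma pos_of_chainGraph_adj (hπpos : ∀ x, 0 < π x) (hrev : ∀ x y, π x * Q x y = π y * Q y x)
    {x y : V} (h : (chainGraph Q).Adj x y) : 0 < Q x y := by
  rcases h.2 with h | h
  · exact h
  · have : 0 < π x * Q x y := hrev x y ▸ mul_pos (hπpos y) h
    exact pos_of_mul_pos_right this (hπpos x).le

lemma IsEdgeCost.edgeTerm_nonneg {Φ : ℝ → ℝ → ℝ} (hΦ : IsEdgeCost Φ) (hQ : ∀ x y, x ≠ y → 0 ≤ Q x y)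
    (hπpos : ∀ x, 0 < π x) {h : V → ℝ} (hh : ∀ x, 0 < h x) (x y : V) :
    0 ≤ π x * Q x y * Φ (h x) (h y) := by
  rcases eq_or_ne x y with rfl | hxy
  · simp [hΦ.self_eq_zero]
  · exact mul_nonneg (mul_nonneg (hπpos x).le (hQ x y hxy)) (hΦ.nonneg (hh x) (hh y))

variable [Fintype V] [DecidableEq V]

lemma le_jumpRate (hQ : ∀ x y, x ≠ y → 0 ≤ Q x y) {x y : V} (hxy : x ≠ y) :
    Q x y ≤ jumpRate Q x :=
  single_le_sum (fun z hz => hQ x z (mem_erase.mp hz).1.symm) (mem_erase.mpr ⟨hxy.symm, mem_univ y⟩)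

lemma sparsity_set_finite (Q : V → V → ℝ) :
    {s : ℝ | ∃ x y : V, x ≠ y ∧ 0 < Q x y ∧ s = Q x y / max (jumpRate Q x) (Q y x)}.Finite :=
  (Set.finite_range fun e : V × V => Q e.1 e.2 / max (jumpRate Q e.1) (Q e.2 e.1)).subset
    (by rintro _ ⟨x, y, -, -, rfl⟩; exact ⟨(x, y), rfl⟩)

lemma sparsity_pos_le_one (hQ : ∀ x y, x ≠ y → 0 ≤ Q x y) (hedge : ∃ x y : V, x ≠ y ∧ 0 < Q x y) :
    0 < sparsity Q ∧ sparsity Q ≤ 1 := by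
  obtain ⟨x, y, hxy, hq, hp⟩ := Set.Nonempty.csInf_mem
    (by obtain ⟨x, y, hxy, hq⟩ := hedge; exact ⟨_, x, y, hxy, hq, rfl⟩) (sparsity_set_finite Q)
  have hmax : Q x y ≤ max (jumpRate Q x) (Q y x) := le_max_of_le_left (le_jumpRate hQ hxy)
  rw [sparsity, hp]
  exact ⟨div_pos hq (hq.trans_le hmax), div_le_one_of_le₀ hmax (hq.le.trans hmax)⟩

lemma sparsity_mul_jumpRate_le (hQ : ∀ x y, x ≠ y → 0 ≤ Q x y) {x y : V} (hxy : x ≠ y)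
    (hq : 0 < Q x y) : sparsity Q * jumpRate Q x ≤ Q x y := by
  have hmax : 0 < max (jumpRate Q x) (Q y x) :=
    hq.trans_le (le_max_of_le_left (le_jumpRate hQ hxy))
  have hle : sparsity Q ≤ Q x y / max (jumpRate Q x) (Q y x) :=
    csInf_le (sparsity_set_finite Q).bddBelow ⟨x, y, hxy, hq, rfl⟩
  calc sparsity Q * jumpRate Q x ≤ sparsity Q * max (jumpRate Q x) (Q y x) := by
        gcongr
        · exact (sparsity_pos_le_one hQ ⟨x, y, hxy, hq⟩).1.le
        · exact le_max_left _ _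
    _ ≤ Q x y := (le_div_iff₀ hmax).mp hle

end MarkovGenerator

section Regularization

variable {V : Type*} [Fintype V] [Nonempty V] {Q : V → V → ℝ} {r : ℝ} {f : V → ℝ}

lemma fStar_eq_sup' (x : V) :
    fStar Q r f x = univ.sup' univ_nonempty fun z => (r ^ graphDist Q x z)⁻¹ * f z := by
  simp only [fStar, zpow_neg, zpow_natCast]

lemma le_fStar (x z : V) : (r ^ graphDist Q x z)⁻¹ * f z ≤ fStar Q r f x :=
  fStar_eq_sup' x ▸ le_sup' (fun z => (r ^ graphDist Q x z)⁻¹ * f z) (mem_univ z)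

lemma exists_fStar_eq (x : V) : ∃ z, fStar Q r f x = (r ^ graphDist Q x z)⁻¹ * f z := by
  obtain ⟨z, -, hz⟩ := exists_mem_eq_sup' univ_nonempty fun z => (r ^ graphDist Q x z)⁻¹ * f z
  exact ⟨z, (fStar_eq_sup' x).trans hz⟩

lemma le_fStar_self (x : V) : f x ≤ fStar Q r f x := by
  simpa [graphDist] using le_fStar (Q := Q) (r := r) (f := f) x x

lemma fStar_le_mul_fStar_of_adj (hr : 1 ≤ r) (hf : ∀ z, 0 ≤ f z) {x y : V}
    (h : (chainGraph Q).Adj x y) : fStar Q r f x ≤ r * fStar Q r f y := by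
  obtain ⟨z, hz⟩ := exists_fStar_eq (Q := Q) (r := r) (f := f) x
  have hd : graphDist Q y z ≤ graphDist Q x z + 1 := by
    have := h.symm.reachable.dist_triangle_left z
    rw [SimpleGraph.dist_eq_one_iff_adj.mpr h.symm] at this
    unfold graphDist
    omega
  calc fStar Q r f x = r * ((r ^ (graphDist Q x z + 1))⁻¹ * f z) := by
        rw [hz, pow_succ]
        field_simp
    _ ≤ r * ((r ^ graphDist Q y z)⁻¹ * f z) := by
        gcongr
        exact hf z
    _ ≤ r * fStar Q r f y := by
        gcongr
        exact le_fStar y z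

lemma IsEdgeCost.apply_fStar_le_of_adj {Φ : ℝ → ℝ → ℝ} (hΦ : IsEdgeCost Φ)
    (hG : (chainGraph Q).Connected) (hr : 1 ≤ r) (hf : ∀ z, 0 < f z) {x y : V}
    (hxy : (chainGraph Q).Adj x y) (hle : fStar Q r f y ≤ fStar Q r f x) :
    Φ (fStar Q r f x) (fStar Q r f y) ≤ Φ (f x) (f y) ∨
      ∃ u z, (chainGraph Q).Adj u z ∧ r * f u ≤ f z ∧
        Φ (fStar Q r f x) (fStar Q r f y) ≤ Φ (f u) (f z) / r ^ (graphDist Q x u + 1) := by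
  have hr₀ : 0 < r := one_pos.trans_le hr
  obtain ⟨z, hz⟩ := exists_fStar_eq (Q := Q) (r := r) (f := f) x
  rcases hk : graphDist Q x z with _ | n
  · left
    have hgx : fStar Q r f x = f x := by
      rw [hz, hk, hG.dist_eq_zero_iff.mp hk]
      simp
    rw [hgx] at hle ⊢
    exact hΦ.anti _ _ _ (hf y) (le_fStar_self y) hle
  · right
    obtain ⟨u, hzu, hux⟩ := SimpleGraph.exists_adj_dist_eq_of_dist_eq_add_one
      (SimpleGraph.dist_comm.trans hk : (chainGraph Q).dist z x = n + 1)
    have hxu : graphDist Q x u = n := SimpleGraph.dist_comm.trans hux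
    rw [hz, hk] at hle ⊢
    have hfu : r * f u ≤ f z := by
      have := le_fStar (Q := Q) (r := r) (f := f) x u
      rw [hxu, hz, hk] at this
      calc r * f u = r ^ (n + 1) * ((r ^ n)⁻¹ * f u) := by
            field_simp
            ring
        _ ≤ r ^ (n + 1) * ((r ^ (n + 1))⁻¹ * f z) := by gcongr
        _ = f z := by field_simp
    have hgy : (r ^ (n + 1))⁻¹ * f z / r ≤ fStar Q r f y := by
      rw [div_le_iff₀ hr₀, ← hk, ← hz, mul_comm]
      exact fStar_le_mul_fStar_of_adj hr (fun v => (hf v).le) hxy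
    refine ⟨u, z, hzu.symm, hfu, ?_⟩
    calc Φ ((r ^ (n + 1))⁻¹ * f z) (fStar Q r f y)
        ≤ Φ ((r ^ (n + 1))⁻¹ * f z) ((r ^ (n + 1))⁻¹ * (f z / r)) := by
          rw [← mul_div_assoc]
          exact hΦ.anti _ _ _ (by have := hf z; positivity) hgy hle
      _ = (r ^ (n + 1))⁻¹ * Φ (f z) (f z / r) :=
          hΦ.homogeneous _ _ _ (by positivity) (hf z) (by have := hf z; positivity)
      _ ≤ (r ^ (n + 1))⁻¹ * Φ (f z) (f u) := by
          gcongr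
          exact hΦ.anti _ _ _ (hf u) ((le_div_iff₀ hr₀).mpr (by linarith))
            (div_le_self (hf z).le hr)
      _ = Φ (f u) (f z) / r ^ (graphDist Q x u + 1) := by
          rw [hΦ.symm, hxu, inv_mul_eq_div]

end Regularization

section Comparison

variable {V : Type*} [Fintype V] {π : V → ℝ} {Q : V → V → ℝ} {Φ : ℝ → ℝ → ℝ} {r : ℝ}
  {f : V → ℝ}

def edgeEnergy (π : V → ℝ) (Q : V → V → ℝ) (Φ : ℝ → ℝ → ℝ) (h : V → ℝ) : ℝ :=
  1 / 2 * ∑ x, ∑ y, π x * Q x y * Φ (h x) (h y)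

lemma dirichletForm_eq_edgeEnergy (π : V → ℝ) (Q : V → V → ℝ) (Φ : ℝ → ℝ → ℝ) (u h k : V → ℝ)
    (hΦ : ∀ x y, (h x - h y) * (k x - k y) = Φ (u x) (u y)) :
    dirichletForm π Q h k = edgeEnergy π Q Φ u := by
  simp only [dirichletForm, edgeEnergy, mul_assoc, hΦ]

lemma IsEdgeCost.edgeEnergy_eq_zero (hΦ : IsEdgeCost Φ) (hQ₀ : ∀ x y, x ≠ y → Q x y = 0)
    (h : V → ℝ) : edgeEnergy π Q Φ h = 0 := by
  refine mul_eq_zero_of_right _ (sum_eq_zero fun x _ => sum_eq_zero fun y _ => ?_)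
  rcases eq_or_ne x y with rfl | hxy
  · simp [hΦ.self_eq_zero]
  · simp [hQ₀ x y hxy]

lemma IsEdgeCost.edgeEnergy_nonneg (hΦ : IsEdgeCost Φ) (hQ : ∀ x y, x ≠ y → 0 ≤ Q x y)
    (hπpos : ∀ x, 0 < π x) {h : V → ℝ} (hh : ∀ x, 0 < h x) : 0 ≤ edgeEnergy π Q Φ h :=
  mul_nonneg (by norm_num)
    (sum_nonneg fun x _ => sum_nonneg fun y _ => hΦ.edgeTerm_nonneg hQ hπpos hh x y)

variable [DecidableEq V]

/-- The edges `(u, z)` along which `f` grows by a factor `r` pay, with weight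
`r ^ (-(d(x, u) + 1))`, for the edges at `x` on which `f⋆ x` is not attained at `x`. -/
def steepEdgeSum (Q : V → V → ℝ) (Φ : ℝ → ℝ → ℝ) (r : ℝ) (f : V → ℝ) (x : V) : ℝ :=
  ∑ u, ∑ z, if u ≠ z ∧ 0 < Q u z ∧ r * f u ≤ f z then
    Φ (f u) (f z) / r ^ (graphDist Q x u + 1) else 0

lemma sum_mul_jumpRate_div_pow_le (hQ : ∀ x y, x ≠ y → 0 ≤ Q x y)
    (hG : (chainGraph Q).Connected) (hπpos : ∀ x, 0 < π x)
    (hrev : ∀ x y, π x * Q x y = π y * Q y x) {p : ℝ} (hp : 0 < p)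
    (hsparse : ∀ x y, x ≠ y → 0 < Q x y → p * jumpRate Q x ≤ Q x y) (hpr : 1 < p * r)
    {u z : V} (huz : u ≠ z) (hq : 0 < Q u z) :
    ∑ x, π x * jumpRate Q x / r ^ (graphDist Q x u + 1) ≤ (p * r - 1)⁻¹ * (π u * Q u z) := by
  have hr : 0 < r := pos_of_mul_pos_right (one_pos.trans hpr) hp.le
  have hmass : ∀ x, π x * jumpRate Q x = ∑ z ∈ univ.erase x, π x * Q x z :=
    fun x => mul_sum _ _ _
  have hgraph := SimpleGraph.sum_div_pow_dist_le (c := fun x y => π x * Q x y) hG hp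
    (fun x y hxy => mul_nonneg (hπpos x).le (hQ x y hxy))
    (fun x y hxy => by
      rw [← hmass, hrev, mul_left_comm]
      exact mul_le_mul_of_nonneg_left
        (hsparse y x hxy.ne.symm (pos_of_chainGraph_adj hπpos hrev hxy.symm)) (hπpos y).le)
    hpr u
  simp only [← hmass] at hgraph
  have hmu : p * (π u * jumpRate Q u) ≤ π u * Q u z := by
    rw [mul_left_comm]
    exact mul_le_mul_of_nonneg_left (hsparse u z huz hq) (hπpos u).le
  calc ∑ x, π x * jumpRate Q x / r ^ (graphDist Q x u + 1)
      = r⁻¹ * ∑ x, π x * jumpRate Q x / r ^ (chainGraph Q).dist u x := by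
        rw [mul_sum]
        refine sum_congr rfl fun x _ => ?_
        rw [graphDist, SimpleGraph.dist_comm, pow_succ]
        field_simp
    _ ≤ r⁻¹ * (π u * jumpRate Q u / (1 - (p * r)⁻¹)) := by gcongr
    _ = (p * r - 1)⁻¹ * (p * (π u * jumpRate Q u)) := by
        have : p * r - 1 ≠ 0 := by linarith
        field_simp
    _ ≤ (p * r - 1)⁻¹ * (π u * Q u z) := by gcongr

lemma IsEdgeCost.sum_mul_steepEdgeSum_le (hΦ : IsEdgeCost Φ) (hQ : ∀ x y, x ≠ y → 0 ≤ Q x y)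
    (hG : (chainGraph Q).Connected) (hπpos : ∀ x, 0 < π x)
    (hrev : ∀ x y, π x * Q x y = π y * Q y x) (hf : ∀ x, 0 < f x) {p : ℝ} (hp : 0 < p)
    (hsparse : ∀ x y, x ≠ y → 0 < Q x y → p * jumpRate Q x ≤ Q x y) (hpr : 1 < p * r) :
    ∑ x, π x * jumpRate Q x * steepEdgeSum Q Φ r f x ≤
      (p * r - 1)⁻¹ * ∑ u, ∑ z, if u ≠ z ∧ 0 < Q u z ∧ r * f u ≤ f z then
        π u * Q u z * Φ (f u) (f z) else 0 := by
  unfold steepEdgeSum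
  simp_rw [mul_sum]
  rw [sum_comm]
  refine sum_le_sum fun u _ => ?_
  rw [sum_comm]
  refine sum_le_sum fun z _ => ?_
  split_ifs with hsteep
  · calc ∑ x, π x * jumpRate Q x * (Φ (f u) (f z) / r ^ (graphDist Q x u + 1))
        = Φ (f u) (f z) * ∑ x, π x * jumpRate Q x / r ^ (graphDist Q x u + 1) := by
          rw [mul_sum]
          exact sum_congr rfl fun x _ => by ring
      _ ≤ Φ (f u) (f z) * ((p * r - 1)⁻¹ * (π u * Q u z)) := by
          gcongr
          · exact hΦ.nonneg (hf u) (hf z)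
          · exact sum_mul_jumpRate_div_pow_le hQ hG hπpos hrev hp hsparse hpr hsteep.1 hsteep.2.1
      _ = (p * r - 1)⁻¹ * (π u * Q u z * Φ (f u) (f z)) := by ring
  · simp

variable [Nonempty V]

lemma IsEdgeCost.edgeTerm_fStar_le (hΦ : IsEdgeCost Φ) (hQ : ∀ x y, x ≠ y → 0 ≤ Q x y)
    (hG : (chainGraph Q).Connected) (hπpos : ∀ x, 0 < π x)
    (hrev : ∀ x y, π x * Q x y = π y * Q y x) (hr : 1 ≤ r) (hf : ∀ x, 0 < f x) {x y : V}
    (hxy : x ≠ y) :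
    (if fStar Q r f y < fStar Q r f x then
        π x * Q x y * Φ (fStar Q r f x) (fStar Q r f y) else 0) ≤
      (if fStar Q r f y < fStar Q r f x then π x * Q x y * Φ (f x) (f y) else 0) +
        π x * Q x y * steepEdgeSum Q Φ r f x := by
  have hr₀ : 0 < r := one_pos.trans_le hr
  have hc : 0 ≤ π x * Q x y := mul_nonneg (hπpos x).le (hQ x y hxy)
  have hterm : ∀ u z, 0 ≤ if u ≠ z ∧ 0 < Q u z ∧ r * f u ≤ f z then
      Φ (f u) (f z) / r ^ (graphDist Q x u + 1) else 0 := by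
    intro u z
    split_ifs
    · exact div_nonneg (hΦ.nonneg (hf u) (hf z)) (by positivity)
    · exact le_rfl
  have hB : 0 ≤ π x * Q x y * steepEdgeSum Q Φ r f x :=
    mul_nonneg hc (sum_nonneg fun u _ => sum_nonneg fun z _ => hterm u z)
  have hfxy : 0 ≤ π x * Q x y * Φ (f x) (f y) := mul_nonneg hc (hΦ.nonneg (hf x) (hf y))
  split_ifs with hlt
  swap
  · simpa using hB
  rcases (hQ x y hxy).eq_or_lt with hq | hq
  · simp [← hq]
  rcases hΦ.apply_fStar_le_of_adj hG hr hf ⟨hxy, Or.inl hq⟩ hlt.le with h | ⟨u, z, huz, hfuz, h⟩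
  · linarith [mul_le_mul_of_nonneg_left h hc]
  · have hsteep : Φ (f u) (f z) / r ^ (graphDist Q x u + 1) ≤ steepEdgeSum Q Φ r f x := by
      refine le_trans ?_ (single_le_sum (fun u _ => sum_nonneg fun z _ => hterm u z) (mem_univ u))
      refine le_trans ?_ (single_le_sum (fun z _ => hterm u z) (mem_univ z))
      rw [if_pos ⟨huz.ne, pos_of_chainGraph_adj hπpos hrev huz, hfuz⟩]
    linarith [mul_le_mul_of_nonneg_left (h.trans hsteep) hc]

lemma IsEdgeCost.sum_edgeTerm_fStar_le (hΦ : IsEdgeCost Φ) (hQ : ∀ x y, x ≠ y → 0 ≤ Q x y)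
    (hG : (chainGraph Q).Connected) (hπpos : ∀ x, 0 < π x)
    (hrev : ∀ x y, π x * Q x y = π y * Q y x) (hr : 1 ≤ r) (hf : ∀ x, 0 < f x) (x : V) :
    ∑ y, (if fStar Q r f y < fStar Q r f x then
        π x * Q x y * Φ (fStar Q r f x) (fStar Q r f y) else 0) ≤
      ∑ y, (if fStar Q r f y < fStar Q r f x then π x * Q x y * Φ (f x) (f y) else 0) +
        π x * jumpRate Q x * steepEdgeSum Q Φ r f x := by
  rw [← sum_erase univ (a := x) (f := fun y => if fStar Q r f y < fStar Q r f x then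
      π x * Q x y * Φ (fStar Q r f x) (fStar Q r f y) else 0) (by simp),
    ← sum_erase univ (a := x) (f := fun y => if fStar Q r f y < fStar Q r f x then
      π x * Q x y * Φ (f x) (f y) else 0) (by simp),
    jumpRate, mul_sum, sum_mul, ← sum_add_distrib]
  exact sum_le_sum fun y hy =>
    hΦ.edgeTerm_fStar_le hQ hG hπpos hrev hr hf (mem_erase.mp hy).1.symm

theorem IsEdgeCost.edgeEnergy_fStar_le (hΦ : IsEdgeCost Φ) (hQ : ∀ x y, x ≠ y → 0 ≤ Q x y)
    (hG : (chainGraph Q).Connected) (hπpos : ∀ x, 0 < π x)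
    (hrev : ∀ x y, π x * Q x y = π y * Q y x) (hf : ∀ x, 0 < f x) {p : ℝ} (hp : 0 < p)
    (hsparse : ∀ x y, x ≠ y → 0 < Q x y → p * jumpRate Q x ≤ Q x y) (hpr : 1 < p * r)
    (hr : 1 < r) :
    edgeEnergy π Q Φ (fStar Q r f) ≤ (1 + (p * r - 1)⁻¹) * edgeEnergy π Q Φ f := by
  set g := fStar Q r f
  have hsymm : ∀ (h : V → ℝ) x y,
      π x * Q x y * Φ (h x) (h y) = π y * Q y x * Φ (h y) (h x) := by
    intro h x y
    rw [hrev, hΦ.symm]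
  have hnonneg := fun x y => hΦ.edgeTerm_nonneg hQ hπpos hf x y
  have hdown := two_mul_sum_sum_ite_le _ (fun x y => g y < g x) (hsymm f) hnonneg
    fun x y h h' => h.not_gt h'
  have hsteep := two_mul_sum_sum_ite_le _ (fun u z => u ≠ z ∧ 0 < Q u z ∧ r * f u ≤ f z)
    (hsymm f) hnonneg fun u z h h' => by nlinarith [hf u, hf z, h.2.2, h'.2.2]
  have hpr₀ : 0 ≤ (p * r - 1)⁻¹ := inv_nonneg.mpr (by linarith)
  unfold edgeEnergy
  rw [sum_sum_eq_two_mul_sum_sum_ite_lt _ g (hsymm g)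
    fun x y h => by rw [h, hΦ.self_eq_zero, mul_zero]]
  calc 1 / 2 * (2 * ∑ x, ∑ y, if g y < g x then π x * Q x y * Φ (g x) (g y) else 0)
      ≤ ∑ x, ((∑ y, if g y < g x then π x * Q x y * Φ (f x) (f y) else 0) +
          π x * jumpRate Q x * steepEdgeSum Q Φ r f x) := by
        linarith [sum_le_sum fun x (_ : x ∈ univ) =>
          hΦ.sum_edgeTerm_fStar_le hQ hG hπpos hrev hr.le hf x]
    _ = (∑ x, ∑ y, if g y < g x then π x * Q x y * Φ (f x) (f y) else 0) +
          ∑ x, π x * jumpRate Q x * steepEdgeSum Q Φ r f x := sum_add_distrib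
    _ ≤ (∑ x, ∑ y, if g y < g x then π x * Q x y * Φ (f x) (f y) else 0) +
          (p * r - 1)⁻¹ * ∑ u, ∑ z, if u ≠ z ∧ 0 < Q u z ∧ r * f u ≤ f z then
            π u * Q u z * Φ (f u) (f z) else 0 := by
        gcongr
        exact hΦ.sum_mul_steepEdgeSum_le hQ hG hπpos hrev hf hp hsparse hpr
    _ ≤ (1 + (p * r - 1)⁻¹) * (1 / 2 * ∑ x, ∑ y, π x * Q x y * Φ (f x) (f y)) := by
        nlinarith

theorem IsEdgeCost.edgeEnergy_fStar_sparsity_le (hΦ : IsEdgeCost Φ)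
    (hQ : ∀ x y, x ≠ y → 0 ≤ Q x y) (hirr : MarkovIrreducible Q) (hπpos : ∀ x, 0 < π x)
    (hrev : ∀ x y, π x * Q x y = π y * Q y x) (hf : ∀ x, 0 < f x) :
    edgeEnergy π Q Φ (fStar Q (4 / sparsity Q ^ 2) f) ≤ 4 / 3 * edgeEnergy π Q Φ f := by
  by_cases hedge : ∃ x y : V, x ≠ y ∧ 0 < Q x y
  swap
  · -- `sparsity Q` is then the junk value `sInf ∅ = 0`, but every energy vanishes.
    have hQ₀ : ∀ x y, x ≠ y → Q x y = 0 := fun x y hxy =>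
      le_antisymm (not_lt.mp fun hq => hedge ⟨x, y, hxy, hq⟩) (hQ x y hxy)
    simp only [hΦ.edgeEnergy_eq_zero hQ₀, mul_zero, le_refl]
  obtain ⟨hp, hp₁⟩ := sparsity_pos_le_one hQ hedge
  set p := sparsity Q
  have hpr : 4 ≤ p * (4 / p ^ 2) := by
    rw [show p * (4 / p ^ 2) = 4 / p by field_simp, le_div_iff₀ hp]
    linarith
  have hr : 1 < 4 / p ^ 2 := by
    rw [lt_div_iff₀ (by positivity)]
    nlinarith
  refine (hΦ.edgeEnergy_fStar_le hQ hirr.connected hπpos hrev hf hp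
    (fun _ _ hxy hq => sparsity_mul_jumpRate_le hQ hxy hq) (by linarith) hr).trans
    (mul_le_mul_of_nonneg_right ?_ (hΦ.edgeEnergy_nonneg hQ hπpos hf))
  have := inv_anti₀ (by norm_num : (0 : ℝ) < 3) (by linarith : 3 ≤ p * (4 / p ^ 2) - 1)
  norm_num at this
  linarith

end Comparison

theorem comparison_of_dirichlet_forms_general
    (π : X → ℝ) (Q : X → X → ℝ)
    (hQ : ∀ x y : X, x ≠ y → 0 ≤ Q x y)
    (hirr : MarkovIrreducible Q)
    (hπpos : ∀ x : X, 0 < π x)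
    (hrev : ∀ x y : X, π x * Q x y = π y * Q y x)
    (f : X → ℝ) (hf : ∀ x, 0 < f x) :
     dirichletForm π Q (fun x => Real.sqrt (fStar Q (4 / sparsity Q ^ 2) f x))
        (fun x => Real.sqrt (fStar Q (4 / sparsity Q ^ 2) f x)) ≤
      (4 / 3) * dirichletForm π Q (fun x => Real.sqrt (f x)) (fun x => Real.sqrt (f x)) ∧
    dirichletForm π Q (fStar Q (4 / sparsity Q ^ 2) f)
        (fun x => Real.log (fStar Q (4 / sparsity Q ^ 2) f x)) ≤
      (4 / 3) * dirichletForm π Q f (fun x => Real.log (f x)) := by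
  have key := fun Φ (hΦ : IsEdgeCost Φ) =>
    hΦ.edgeEnergy_fStar_sparsity_le hQ hirr hπpos hrev hf
  constructor
  · convert key _ isEdgeCost_sqrt using 2 <;>
      exact dirichletForm_eq_edgeEnergy _ _ _ _ _ _ fun _ _ => rfl
  · convert key _ isEdgeCost_log using 2 <;>
      exact dirichletForm_eq_edgeEnergy _ _ _ _ _ _ fun _ _ => rfl

theorem comparison_of_dirichlet_forms
    (π : X → ℝ) (Q : X → X → ℝ)
    (hQ : ∀ x y : X, x ≠ y → 0 ≤ Q x y)
    (hQsum : ∀ x : X, ∑ y : X, Q x y = 0)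
    (hirr : MarkovIrreducible Q)
    (hπpos : ∀ x : X, 0 < π x)
    (hπsum : ∑ x : X, π x = 1)
    (hrev : ∀ x y : X, π x * Q x y = π y * Q y x)
    (f : X → ℝ) (hf : ∀ x, 0 < f x) :
     dirichletForm π Q (fun x => Real.sqrt (fStar Q (4 / sparsity Q ^ 2) f x))
        (fun x => Real.sqrt (fStar Q (4 / sparsity Q ^ 2) f x)) ≤
      (4 / 3) * dirichletForm π Q (fun x => Real.sqrt (f x)) (fun x => Real.sqrt (f x)) ∧
    dirichletForm π Q (fStar Q (4 / sparsity Q ^ 2) f)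
        (fun x => Real.log (fStar Q (4 / sparsity Q ^ 2) f x)) ≤
      (4 / 3) * dirichletForm π Q f (fun x => Real.log (f x)) :=
  comparison_of_dirichlet_forms_general π Q hQ hirr hπpos hrev f hf

end
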